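/- arXiv:2602.03021 — 5 statements merged into one kernel-verified Lean document; each statement's English description precedes it below -/
import Mathlib

section
/- Let A be a commutative ring, r a natural number, and f : Fin r → A a family of elements forming a regular sequence on A. Let I be the ideal generated by the f i and set S = A / I. Then the conormal module I/I² is a free S-module of rank r; more precisely, there is a basis of I/I² over S indexed by Fin r whose i-th element is the class of f i in I/I². -/
/-!
The classes of the `fᵢ` span `I/I²` because the `fᵢ` generate `I`. For independence, suppose
`∑ aᵢ fᵢ ∈ I²`; writing this element as `∑ cᵢ fᵢ` with `cᵢ ∈ I` gives the relation
`∑ (aᵢ - cᵢ) fᵢ = 0`. Every relation among the terms of a regular sequence has coefficients in `I`: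
the last coefficient lies in `(f₁, …, f_{r-1})` since `f_r` is a nonzerodivisor modulo that ideal,
and expanding it in terms of `f₁, …, f_{r-1}` turns the relation into a shorter one. Hence `aᵢ ∈ I`.
-/

open RingTheory.Sequence
open scoped Pointwise

theorem Submodule.mem_ideal_span_range_smul_iff_exists_fun {ι A M : Type*} [Fintype ι]
    [CommSemiring A] [AddCommMonoid M] [Module A M] (f : ι → A) (N : Submodule A M) {x : M} :
    x ∈ Ideal.span (Set.range f) • N ↔ ∃ n : ι → M, (∀ i, n i ∈ N) ∧ ∑ i, f i • n i = x := by
  refine ⟨fun hx => ?_, ?_⟩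
  · refine Submodule.smul_induction_on hx (fun a ha y hy => ?_) ?_
    · obtain ⟨c, rfl⟩ := Ideal.mem_span_range_iff_exists_fun.mp ha
      refine ⟨fun i => c i • y, fun i => N.smul_mem _ hy, ?_⟩
      simp only [smul_smul, Finset.sum_smul, mul_comm]
    · rintro x₁ x₂ ih₁ ih₂
      obtain ⟨n₁, hn₁, rfl⟩ := ih₁
      obtain ⟨n₂, hn₂, rfl⟩ := ih₂
      exact ⟨n₁ + n₂, fun i => N.add_mem (hn₁ i) (hn₂ i), by
        simp only [Pi.add_apply, smul_add, Finset.sum_add_distrib]⟩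
  · rintro ⟨n, hn, rfl⟩
    exact Submodule.sum_mem _ fun i _ =>
      Submodule.smul_mem_smul (Ideal.subset_span (Set.mem_range_self i)) (hn i)

theorem Ideal.ofList_ofFn {A : Type*} [Semiring A] {r : ℕ} (f : Fin r → A) :
    Ideal.ofList (List.ofFn f) = Ideal.span (Set.range f) := by
  simp only [Ideal.ofList, List.mem_ofFn]
  rfl

theorem RingTheory.Sequence.IsWeaklyRegular.mem_span_smul_top_of_sum_smul_eq_zero
    {A M : Type*} [CommRing A] [AddCommGroup M] [Module A M] {r : ℕ} {f : Fin r → A}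
    (hf : IsWeaklyRegular M (List.ofFn f)) {m : Fin r → M} (hm : ∑ i, f i • m i = 0) (i : Fin r) :
    m i ∈ Ideal.span (Set.range f) • (⊤ : Submodule A M) := by
  induction r with
  | zero => exact i.elim0
  | succ r ih =>
    set g : Fin r → A := fun j => f j.castSucc
    set N : Submodule A M := Ideal.span (Set.range g) • ⊤
    rw [List.ofFn_succ', List.concat_eq_append, isWeaklyRegular_append_iff,
      isWeaklyRegular_singleton_iff, Ideal.ofList_ofFn] at hf
    obtain ⟨hg, hlast⟩ := hf
    rw [Fin.sum_univ_castSucc] at hm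
    have hN : N ≤ Ideal.span (Set.range f) • ⊤ :=
      Submodule.smul_mono_left (Ideal.span_mono (Set.range_comp_subset_range _ f))
    have hlast_smul_mem : f (Fin.last r) • m (Fin.last r) ∈ N := by
      rw [eq_neg_of_add_eq_zero_right hm]
      exact neg_mem ((Submodule.mem_ideal_span_range_smul_iff_exists_fun g ⊤).mpr
        ⟨_, fun _ => Submodule.mem_top, rfl⟩)
    -- `f (last r)` is a nonzerodivisor on `M ⧸ N`.
    have hlast_mem : m (Fin.last r) ∈ N := by
      rw [← Submodule.Quotient.mk_eq_zero] at hlast_smul_mem ⊢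
      exact hlast.right_eq_zero_of_smul hlast_smul_mem
    obtain ⟨n, -, hn⟩ :=
      (Submodule.mem_ideal_span_range_smul_iff_exists_fun g ⊤).mp hlast_mem
    have hrel : ∑ j, g j • (m j.castSucc + f (Fin.last r) • n j) = 0 := by
      simp only [smul_add, Finset.sum_add_distrib, smul_comm (g _) (f (Fin.last r)),
        ← Finset.smul_sum, hn]
      exact hm
    refine Fin.lastCases (hN hlast_mem) (fun j => ?_) i
    rw [← add_sub_cancel_right (m j.castSucc) (f (Fin.last r) • n j)]
    exact sub_mem (hN (ih hg hrel j)) (Submodule.smul_mem_smul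
      (Ideal.subset_span (Set.mem_range_self _)) Submodule.mem_top)

section Cotangent

variable {A ι : Type*} [CommRing A] (f : ι → A)

noncomputable def cotangentClass (i : ι) : (Ideal.span (Set.range f)).Cotangent :=
  (Ideal.span (Set.range f)).toCotangent ⟨f i, Ideal.subset_span (Set.mem_range_self i)⟩

theorem sum_mk_smul_cotangentClass [Fintype ι] (a : ι → A) :
    ∑ i, Ideal.Quotient.mk (Ideal.span (Set.range f)) (a i) • cotangentClass f i =
      (Ideal.span (Set.range f)).toCotangent
        ⟨∑ i, a i * f i, Ideal.mem_span_range_iff_exists_fun.mpr ⟨a, rfl⟩⟩ := by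
  change ∑ i, (Ideal.span (Set.range f)).toCotangent (a i • _) = _
  rw [← map_sum]
  congr 1
  ext
  simp

theorem span_range_cotangentClass [Fintype ι] :
    Submodule.span (A ⧸ Ideal.span (Set.range f)) (Set.range (cotangentClass f)) = ⊤ := by
  refine eq_top_iff.mpr fun x _ => ?_
  obtain ⟨⟨y, hy⟩, rfl⟩ := (Ideal.span (Set.range f)).toCotangent_surjective x
  obtain ⟨a, rfl⟩ := Ideal.mem_span_range_iff_exists_fun.mp hy
  rw [← sum_mk_smul_cotangentClass]
  exact Submodule.sum_mem _ fun i _ => Submodule.smul_mem _ _ (Submodule.subset_span ⟨i, rfl⟩)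

theorem RingTheory.Sequence.IsWeaklyRegular.linearIndependent_cotangentClass {r : ℕ}
    {f : Fin r → A} (hf : IsWeaklyRegular A (List.ofFn f)) :
    LinearIndependent (A ⧸ Ideal.span (Set.range f)) (cotangentClass f) := by
  set I := Ideal.span (Set.range f)
  refine Fintype.linearIndependent_iff.mpr fun g hg i => ?_
  obtain ⟨a, rfl⟩ := (Ideal.Quotient.mk_surjective (I := I)).comp_left g
  simp only [Function.comp_apply, Ideal.Quotient.eq_zero_iff_mem] at hg ⊢
  rw [sum_mk_smul_cotangentClass, Ideal.toCotangent_eq_zero, pow_two, ← smul_eq_mul,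
    Submodule.mem_ideal_span_range_smul_iff_exists_fun] at hg
  obtain ⟨c, hcI, hc⟩ := hg
  have hrel : ∑ i, f i • (a i - c i) = 0 := by
    rw [Finset.sum_congr rfl fun i _ => smul_sub (f i) (a i) (c i), Finset.sum_sub_distrib, hc,
      sub_eq_zero]
    simp only [smul_eq_mul, mul_comm]
  have hac : a i - c i ∈ I := by
    simpa [smul_eq_mul, Ideal.mul_top] using hf.mem_span_smul_top_of_sum_smul_eq_zero hrel i
  simpa using I.add_mem hac (hcI i)

end Cotangent

/-- If `f : Fin r → A` is a regular sequence on the commutative ring `A` generating the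
ideal `I`, then the conormal module `I/I²` is free of rank `r` over `A ⧸ I`, with basis
given by the classes of the `f i`. -/
theorem conormal_basis_of_regular_sequence {A : Type*} [CommRing A] {r : ℕ}
    (f : Fin r → A) (hreg : RingTheory.Sequence.IsRegular A (List.ofFn f))
    (I : Ideal A) (hI : I = Ideal.span (Set.range f)) :
    ∃ b : Module.Basis (Fin r) (A ⧸ I) I.Cotangent,
      ∀ i : Fin r,
        b i = I.toCotangent ⟨f i, hI ▸ Ideal.subset_span (Set.mem_range_self i)⟩ := by
  subst hI
  exact ⟨Module.Basis.mk hreg.linearIndependent_cotangentClass (span_range_cotangentClass f).ge,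
    Module.Basis.mk_apply _ _⟩
end

section
/- Let R be a commutative ring, n and m natural numbers, f : Fin m → R[x₁,…,x_n] a family of polynomials, I the ideal generated by the f j, and S = R[x₁,…,x_n]/I. Let J be the n × m Jacobian matrix over S whose (i, j) entry is the image in S of the partial derivative ∂f_j/∂x_i. Then the module of Kähler differentials Ω_{S/R} is isomorphic as an S-module to the cokernel of the S-linear map S^m → S^n given by multiplication by the matrix J. -/
/-!
The polynomials `f j` form a presentation of `S` as an `R`-algebra, and the conormal sequence
`I/I² → S ⊗ Ω[R[x]⁄R] → Ω[S⁄R] → 0` is exact. Since `Ω[R[x]⁄R]` is free on the `dxᵢ`, with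
`df = ∑ᵢ ∂f/∂xᵢ dxᵢ`, this presents `Ω[S⁄R]` as the quotient of `Sⁿ` by the images of the `df j`,
which are the columns of the Jacobian matrix.
-/

open MvPolynomial

namespace Algebra.Presentation

variable {R S ι σ : Type*} [CommRing R] [CommRing S] [Algebra R S]
  (pres : Algebra.Presentation R S ι σ)

lemma differentialsRelations_relation_apply (r : σ) (i : ι) :
    pres.differentialsRelations.relation r i =
      algebraMap pres.Ring S (pderiv i (pres.relation r)) :=
  congrArg _ (KaehlerDifferential.mvPolynomialBasis_repr_apply R ι _ i)

noncomputable def differentialsEquivPiQuotient [Finite ι] :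
    Ω[S⁄R] ≃ₗ[S] (ι → S) ⧸ Submodule.span S
      (Set.range fun r i => algebraMap pres.Ring S (pderiv i (pres.relation r))) :=
  pres.differentialsSolution_isPresentation.linearEquiv.symm ≪≫ₗ
    Submodule.Quotient.equiv _ _ (Finsupp.linearEquivFunOnFinite S S ι) (by
      rw [Submodule.map_span, ← Set.range_comp]
      congr 2
      ext r i
      exact pres.differentialsRelations_relation_apply r i)

end Algebra.Presentation

open MvPolynomial in
/-- Jacobian presentation of Kähler differentials: if `S = R[x₁,…,xₙ]⧸I` with
`I = (f₁,…,f_m)`, then `Ω_{S/R}` is the cokernel of the linear map `Sᵐ → Sⁿ` given by the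
Jacobian matrix `J = (∂f_j/∂x_i)`. -/
theorem kaehler_iso_coker_jacobian {R : Type*} [CommRing R] {n m : ℕ}
    (f : Fin m → MvPolynomial (Fin n) R)
    (I : Ideal (MvPolynomial (Fin n) R)) (hI : I = Ideal.span (Set.range f))
    (J : Matrix (Fin n) (Fin m) (MvPolynomial (Fin n) R ⧸ I))
    (hJ : ∀ i j, J i j = Ideal.Quotient.mk I (pderiv i (f j))) :
    Nonempty ((Ω[(MvPolynomial (Fin n) R ⧸ I)⁄R]) ≃ₗ[MvPolynomial (Fin n) R ⧸ I]
      ((Fin n → MvPolynomial (Fin n) R ⧸ I) ⧸ LinearMap.range J.mulVecLin)) := by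
  subst hI
  have range_jacobian : LinearMap.range J.mulVecLin = Submodule.span _
      (Set.range fun j i => Ideal.Quotient.mk _ (pderiv i (f j))) := by
    rw [Matrix.range_mulVecLin]
    congr 2
    ext j i
    exact hJ i j
  rw [range_jacobian]
  exact ⟨(Algebra.Presentation.naive (v := f)).differentialsEquivPiQuotient⟩
end

section
/- Let R be a commutative ring, n a natural number, f : Fin n → R[x₁,…,x_n] a family of n polynomials in n variables, I the ideal generated by the f j, and S = R[x₁,…,x_n]/I. Let J be the n × n Jacobian matrix over S whose (i, j) entry is the image in S of ∂f_j/∂x_i. Then S is formally unramified over R if and only if the determinant of J is a unit in S. -/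
/-!
For any presentation `S = R[X] ⧸ I`, the conormal sequence `I/I² → S ⊗ Ω[R[X]⁄R] → Ω[S⁄R] → 0`
is exact, so `Ω[S⁄R] = 0` exactly when the images `∑ᵢ ∂fⱼ/∂xᵢ dxᵢ` of generators `fⱼ` of `I`
span the free module `⊕ᵢ S dxᵢ`, i.e. when the columns of the Jacobian span `Sⁿ`. For a square
Jacobian over a commutative ring this is equivalent to its determinant being a unit.
-/

open MvPolynomial

theorem Matrix.span_col_eq_top_iff_isUnit_det {m R : Type*} [Fintype m] [DecidableEq m]
    [CommRing R] (A : Matrix m m R) :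
    Submodule.span R (Set.range A.col) = ⊤ ↔ IsUnit A.det := by
  rw [← row_transpose, ← range_vecMulLinear, LinearMap.range_eq_top, coe_vecMulLinear,
    vecMul_surjective_iff_isUnit, isUnit_iff_isUnit_det, det_transpose]

namespace Algebra

variable {R S : Type*} [CommRing R] [CommRing S] [Algebra R S]

theorem Extension.formallyUnramified_iff_surjective_cotangentComplex (P : Extension R S) :
    FormallyUnramified R S ↔ Function.Surjective P.cotangentComplex := by
  rw [formallyUnramified_iff, ← LinearMap.range_eq_top,
    P.exact_cotangentComplex_toKaehler.linearMap_ker_eq.symm, LinearMap.ker_eq_top]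
  refine ⟨fun _ => Subsingleton.elim _ _, fun h => ?_⟩
  have := LinearMap.range_eq_top.2 P.toKaehler_surjective
  rwa [h, LinearMap.range_zero, subsingleton_iff_bot_eq_top, Submodule.subsingleton_iff] at this

theorem Presentation.formallyUnramified_iff_span_jacobian_eq_top {ι σ : Type*} [Finite ι]
    (P : Presentation R S ι σ) :
    FormallyUnramified R S ↔
      Submodule.span S (Set.range fun j i => aeval P.val (pderiv i (P.relation j))) = ⊤ := by
  have hspan := Extension.Cotangent.span_eq_top_of_span_eq_ker (P := P.toExtension) _
    P.span_range_relation_eq_ker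
  rw [P.toExtension.formallyUnramified_iff_surjective_cotangentComplex, ← LinearMap.range_eq_top,
    LinearMap.range_eq_map, ← hspan, Submodule.map_span, ← Set.range_comp,
    ← Submodule.map_eq_top_iff (e := P.cotangentSpaceBasis.equivFun), Submodule.map_span,
    ← Set.range_comp]
  congr! with j i
  simp only [Function.comp_apply, Extension.cotangentComplex_mk]
  exact P.cotangentSpaceBasis_repr_one_tmul _ _

theorem Generators.aeval_val_naive {σ : Type*} {I : Ideal (MvPolynomial σ R)}
    {s : MvPolynomial σ R ⧸ I → MvPolynomial σ R} (hs : ∀ x, Ideal.Quotient.mk I (s x) = x)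
    (p : MvPolynomial σ R) : aeval (Generators.naive s hs).val p = Ideal.Quotient.mk I p := by
  rw [← Ideal.Quotient.mkₐ_eq_mk R, aeval_unique (Ideal.Quotient.mkₐ R I)]
  rfl

end Algebra

open MvPolynomial in
/-- If `S = R[x₁,…,xₙ]⧸I` with `I = (f₁,…,fₙ)` (as many equations as variables), then `S`
is formally unramified over `R` if and only if the determinant of the Jacobian matrix
`J = (∂f_j/∂x_i)` is a unit in `S`. -/
theorem formallyUnramified_iff_isUnit_jacobian_det {R : Type*} [CommRing R] {n : ℕ}
    (f : Fin n → MvPolynomial (Fin n) R)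
    (I : Ideal (MvPolynomial (Fin n) R)) (hI : I = Ideal.span (Set.range f))
    (J : Matrix (Fin n) (Fin n) (MvPolynomial (Fin n) R ⧸ I))
    (hJ : ∀ i j, J i j = Ideal.Quotient.mk I (pderiv i (f j))) :
    Algebra.FormallyUnramified R (MvPolynomial (Fin n) R ⧸ I) ↔ IsUnit J.det := by
  subst hI
  let P := Algebra.Presentation.naive (v := f)
  have hcol : J.col = fun j i => aeval P.val (pderiv i (P.relation j)) := by
    ext j i
    simp [P, hJ, Algebra.Generators.aeval_val_naive]
  rw [P.formallyUnramified_iff_span_jacobian_eq_top, ← J.span_col_eq_top_iff_isUnit_det, hcol]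
end

section
/- Let A be a commutative ring and B a commutative A-algebra. If B is flat as an A-module, finitely presented as an A-algebra, and formally unramified over A, then B is étale over A, i.e., formally étale and of finite presentation. -/
universe u

/-- A flat, finitely presented, formally unramified algebra is étale
(formally étale and of finite presentation). -/
theorem etale_of_flat_finitePresentation_formallyUnramified
    (A B : Type u) [CommRing A] [CommRing B] [Algebra A B]
    [Module.Flat A B] [Algebra.FinitePresentation A B] [Algebra.FormallyUnramified A B] :
    Algebra.Etale A B :=
  Algebra.Etale.of_formallyUnramified_of_flat
end

section
/- Let R be a commutative ring, n a natural number, f : Fin n → R[x₁,…,x_n] a family of n polynomials in n variables, I the ideal generated by the f j, and S = R[x₁,…,x_n]/I. Assume S is flat as an R-module. Let J be the n × n Jacobian matrix over S whose (i, j) entry is the image in S of ∂f_j/∂x_i. Then S is étale over R if and only if the determinant of J is a unit in S. -/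
/-!
Present `S = R[x₁,…,xₙ]⧸(f₁,…,fₙ)` naively by the `n` variables and the `n` relations `fⱼ`: this
presentation has relative dimension `0` and Jacobian `det J`. If `det J` is a unit it is a
submersive presentation, so `S` is standard smooth of relative dimension `0`, hence étale.
Conversely, if `S` is étale then `Ω[S⁄R] = 0`, so the conormal map `I/I² → ⊕ᵢ S dxᵢ` is
surjective. As `I/I²` is spanned by the classes of the `fⱼ`, the columns of `J` span `Sⁿ`, and a
surjective endomorphism of `Sⁿ` is bijective, so `det J` is a unit.
-/

universe u

open MvPolynomial

namespace Algebra

variable {R S ι : Type*} [CommRing R] [CommRing S] [Algebra R S]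

lemma Extension.cotangentComplex_surjective_of_formallyUnramified (P : Extension R S)
    [FormallyUnramified R S] : Function.Surjective P.cotangentComplex :=
  fun z ↦ (P.exact_cotangentComplex_toKaehler z).mp (Subsingleton.elim _ _)

lemma Generators.cotangentRestrict_surjective_of_formallyUnramified (P : Generators R S ι)
    [FormallyUnramified R S] {σ : Type*} {u : σ → ι} (hu : Function.Injective u) :
    Function.Surjective (P.cotangentRestrict hu) :=
  (Finsupp.comapDomain_surjective hu).comp <| P.cotangentSpaceBasis.repr.surjective.comp
    P.toExtension.cotangentComplex_surjective_of_formallyUnramified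

namespace PreSubmersivePresentation

lemma isUnit_jacobian_of_formallyUnramified {σ : Type*} [Finite σ]
    (P : PreSubmersivePresentation R S ι σ) [FormallyUnramified R S] : IsUnit P.jacobian := by
  rw [isUnit_jacobian_iff_aevalDifferential_bijective]
  refine OrzechProperty.bijective_of_surjective_endomorphism _ ?_
  rw [← LinearMap.range_eq_top, aevalDifferential, Module.Basis.constr_range]
  have hcolumns : (fun j i ↦ aeval P.val (pderiv (P.map i) (P.relation j))) =
      Finsupp.linearEquivFunOnFinite S S σ ∘ P.cotangentRestrict P.map_inj ∘
        fun j ↦ Extension.Cotangent.mk ⟨P.relation j, P.relation_mem_ker j⟩ := by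
    ext j i
    exact (congrFun (P.cotangentRestrict_mk P.map_inj ⟨_, P.relation_mem_ker j⟩) i).symm
  have hspan := Extension.Cotangent.span_eq_top_of_span_eq_ker (P := P.toExtension) P.relation
    P.span_range_relation_eq_ker
  rw [hcolumns, Set.range_comp, Set.range_comp, Submodule.span_image_linearEquiv,
    ← Submodule.map_span, hspan, Submodule.map_top, LinearMap.range_eq_top_of_surjective _
      (P.cotangentRestrict_surjective_of_formallyUnramified P.map_inj),
    Submodule.map_top, LinearEquiv.range]

lemma etale_iff_isUnit_jacobian {σ : Type*} [Finite ι] [Finite σ]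
    (P : PreSubmersivePresentation R S ι σ) (hP : P.dimension = 0) :
    Etale R S ↔ IsUnit P.jacobian := by
  refine ⟨fun _ ↦ P.isUnit_jacobian_of_formallyUnramified, fun h ↦ ?_⟩
  have := SubmersivePresentation.isStandardSmoothOfRelativeDimension
    { P with jacobian_isUnit := h } hP
  infer_instance

lemma jacobian_naive {σ : Type*} [Fintype ι] [DecidableEq ι] {v : ι → MvPolynomial σ R}
    (a : ι → σ) (ha : Function.Injective a) :
    (naive (v := v) a ha).jacobian =
      (Matrix.of fun i j ↦ Ideal.Quotient.mk _ (pderiv (a i) (v j))).det := by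
  rw [jacobian_eq_jacobiMatrix_det, RingHom.map_det]
  congr 1
  ext i j
  rw [RingHom.mapMatrix_apply, Matrix.map_apply, jacobiMatrix_naive]
  rfl

end PreSubmersivePresentation

end Algebra

open MvPolynomial in
theorem etale_iff_isUnit_jacobian_det_general {R : Type u} [CommRing R] {n : ℕ}
    (f : Fin n → MvPolynomial (Fin n) R)
    (I : Ideal (MvPolynomial (Fin n) R)) (hI : I = Ideal.span (Set.range f))
    (J : Matrix (Fin n) (Fin n) (MvPolynomial (Fin n) R ⧸ I))
    (hJ : ∀ i j, J i j = Ideal.Quotient.mk I (pderiv i (f j))) :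
    Algebra.Etale R (MvPolynomial (Fin n) R ⧸ I) ↔ IsUnit J.det := by
  subst hI
  let P := Algebra.PreSubmersivePresentation.naive (v := f) id Function.injective_id
  rw [P.etale_iff_isUnit_jacobian (by simp [Algebra.Presentation.dimension]),
    Algebra.PreSubmersivePresentation.jacobian_naive, Matrix.ext hJ]
  rfl

open MvPolynomial in
/-- If `S = R[x₁,…,xₙ]⧸I` with `I = (f₁,…,fₙ)` and `S` is flat over `R`, then `S` is étale
over `R` if and only if the determinant of the Jacobian matrix `J = (∂f_j/∂x_i)` is a unit
in `S`. -/
theorem etale_iff_isUnit_jacobian_det {R : Type u} [CommRing R] {n : ℕ}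
    (f : Fin n → MvPolynomial (Fin n) R)
    (I : Ideal (MvPolynomial (Fin n) R)) (hI : I = Ideal.span (Set.range f))
    (hflat : Module.Flat R (MvPolynomial (Fin n) R ⧸ I))
    (J : Matrix (Fin n) (Fin n) (MvPolynomial (Fin n) R ⧸ I))
    (hJ : ∀ i j, J i j = Ideal.Quotient.mk I (pderiv i (f j))) :
    Algebra.Etale R (MvPolynomial (Fin n) R ⧸ I) ↔ IsUnit J.det :=
  etale_iff_isUnit_jacobian_det_general f I hI J hJ
end
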